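/- arXiv:2604.20900 — 2 statements merged into one kernel-verified Lean document; each statement's English description precedes it below -/
import Mathlib

section
/- If G₁ and G₂ are star-convex weighted graphs with G₁ a subgraph of G₂ (same weight function restricted), then the core of G₁ is contained in the core of G₂. -/
open SimpleGraph

/-- A leaf is a vertex with exactly one neighbor (degree 1). -/
def IsLeaf {V : Type*} (G : SimpleGraph V) (v : V) : Prop := ∃! u, G.Adj v u

/-- A walk is weighted-monotone if the weights along its support are
nondecreasing or nonincreasing. -/
def WalkMonotone {V : Type*} {G : SimpleGraph V} (w : V → NNReal) {a b : V}
    (p : G.Walk a b) : Prop :=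
  List.Chain' (fun x y => w x ≤ w y) p.support ∨
  List.Chain' (fun x y => w y ≤ w x) p.support

/-- `u` belongs to the core of `G` (with weights `w`): from `u` there is a
weighted-monotone path to every leaf. -/
def InCore {V : Type*} (G : SimpleGraph V) (w : V → NNReal) (u : V) : Prop :=
  ∀ v, IsLeaf G v → ∃ p : G.Walk u v, p.IsPath ∧ WalkMonotone w p

/-- A weighted graph with nonempty leaf set is star-convex if its core is
nonempty. -/
def IsStarConvex {V : Type*} (G : SimpleGraph V) (w : V → NNReal) : Prop :=
  (∃ v, IsLeaf G v) ∧ ∃ u, InCore G w u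

/-- If G₁ and G₂ are star-convex weighted graphs with G₁ a subgraph of G₂
(same vertex set and same weight function), then the core of G₁ is contained
in the core of G₂. -/
theorem core_mono {V : Type*} [Fintype V] (G₁ G₂ : SimpleGraph V)
    (w : V → NNReal) (hsub : G₁ ≤ G₂)
    (h₁conn : G₁.Connected) (h₂conn : G₂.Connected)
    (h₁ : IsStarConvex G₁ w) (h₂ : IsStarConvex G₂ w) :
    ∀ u : V, InCore G₁ w u → InCore G₂ w u := by
  intro u hu v hv
  obtain ⟨x₀, hx₀, hx₀uniq⟩ := hv
  -- v is a leaf of G₁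
  have hne : v ≠ x₀ := by rintro rfl; exact G₂.loopless.irrefl _ hx₀
  obtain ⟨p⟩ := h₁conn v x₀
  obtain ⟨y, hy, q, -⟩ := (SimpleGraph.Walk.not_nil_iff (p := p)).mp (SimpleGraph.Walk.not_nil_of_ne hne)
  have hvleaf : IsLeaf G₁ v := by
    refine ⟨y, hy, fun z hz => ?_⟩
    rw [hx₀uniq z (hsub hz), hx₀uniq y (hsub hy)]
  obtain ⟨r, hr, hm⟩ := hu v hvleaf
  refine ⟨r.mapLe hsub, hr.mapLe hsub, ?_⟩
  have hs : (r.mapLe hsub).support = r.support := by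
    rw [SimpleGraph.Walk.support_map]
    exact List.map_id _
  unfold WalkMonotone at hm ⊢
  rw [hs]
  exact hm
end

section
/- Let T be a star-convex weighted tree whose core contains a leaf. Then max over all vertices of w equals max over V_ℓ(T) ∪ C(T) of w, and min over all vertices of w equals min over V_ℓ(T) ∪ C(T) of w. -/
open SimpleGraph

/-- Step lemma: a path starting at a leaf `u` and ending at a non-leaf `v0`
can be extended by a fresh vertex. -/
lemma step_extend {V : Type*} [DecidableEq V] {T : SimpleGraph V} (hacyc : T.IsAcyclic)
    {u v0 : V} (hu : IsLeaf T u) (hv0 : ¬ IsLeaf T v0)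
    (p : T.Walk u v0) (hp : p.IsPath) :
    ∃ z, T.Adj v0 z ∧ z ∉ p.support := by
  cases p with
  | nil =>
      exact absurd hu hv0
  | cons h p₁ =>
      obtain ⟨y, q0, h0, hc⟩ := Walk.exists_cons_eq_concat h p₁
      set p : T.Walk u v0 := Walk.cons h p₁ with hpdef
      have hyadj : T.Adj v0 y := h0.symm
      have : ¬ ∀ z, T.Adj v0 z → z = y := fun hall => hv0 ⟨y, hyadj, hall⟩
      push_neg at this
      obtain ⟨z, hzadj, hzy⟩ := this
      refine ⟨z, hzadj, fun hzmem => ?_⟩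
      have hr1 : (p.dropUntil z hzmem).IsPath := hp.dropUntil hzmem
      have hr2 : (Walk.cons hzadj.symm (Walk.nil : T.Walk v0 v0)).IsPath := by
        rw [Walk.isPath_def]; simp [hzadj.symm.ne]
      have := hacyc.path_unique ⟨p.dropUntil z hzmem, hr1⟩
        ⟨Walk.cons hzadj.symm Walk.nil, hr2⟩
      have hdrop : p.dropUntil z hzmem = Walk.cons hzadj.symm Walk.nil :=
        congrArg Subtype.val this
      have hspec := p.take_spec hzmem
      rw [hdrop] at hspec
      have hs1 : (p.takeUntil z hzmem).support ++ [v0] = p.support := by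
        have := congrArg Walk.support hspec
        rwa [Walk.support_append, Walk.support_cons, Walk.support_nil] at this
      have hs2 : p.support = q0.support ++ [v0] := by
        rw [hc, Walk.support_concat]
      have hsupeq : q0.support = (p.takeUntil z hzmem).support :=
        List.append_cancel_right ((hs2.symm.trans hs1.symm))
      have hy' : q0.support.getLast? = some y := by
        rw [List.getLast?_eq_getLast q0.support_ne_nil, q0.getLast_support]
      have hz' : (p.takeUntil z hzmem).support.getLast? = some z := by
        rw [List.getLast?_eq_getLast (p.takeUntil z hzmem).support_ne_nil,
          (p.takeUntil z hzmem).getLast_support]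
      rw [hsupeq, hz'] at hy'
      exact hzy (Option.some_injective _ hy')

/-- Every path starting at a leaf extends to a path ending at a leaf. -/
lemma extend_to_leaf {V : Type*} [DecidableEq V] [Fintype V] {T : SimpleGraph V}
    (hacyc : T.IsAcyclic) {u : V} (hu : IsLeaf T u) :
    ∀ (n : ℕ) (v0 : V) (p : T.Walk u v0), p.IsPath →
      Fintype.card V ≤ n + p.length + 1 →
      ∃ (v : V) (q : T.Walk u v), q.IsPath ∧ IsLeaf T v ∧
        ∀ y ∈ p.support, y ∈ q.support := by
  intro n
  induction n with
  | zero =>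
      intro v0 p hp hcard
      by_cases hleaf : IsLeaf T v0
      · exact ⟨v0, p, hp, hleaf, fun y hy => hy⟩
      · exfalso
        obtain ⟨z, hz, hzn⟩ := step_extend hacyc hu hleaf p hp
        have hq' : (p.concat hz).IsPath := by
          rw [Walk.isPath_def, Walk.support_concat]
          simp [List.nodup_append, hzn, hp.support_nodup]
          exact fun a ha haz => hzn (haz ▸ ha)
        have hlen : (p.concat hz).support.length ≤ Fintype.card V :=
          hq'.support_nodup.length_le_card
        rw [Walk.length_support, Walk.length_concat] at hlen
        omega
  | succ n ih =>
      intro v0 p hp hcard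
      by_cases hleaf : IsLeaf T v0
      · exact ⟨v0, p, hp, hleaf, fun y hy => hy⟩
      · obtain ⟨z, hz, hzn⟩ := step_extend hacyc hu hleaf p hp
        have hq' : (p.concat hz).IsPath := by
          rw [Walk.isPath_def, Walk.support_concat]
          simp [List.nodup_append, hzn, hp.support_nodup]
          exact fun a ha haz => hzn (haz ▸ ha)
        obtain ⟨v, q, hq, hvleaf, hsub⟩ := ih z (p.concat hz) hq'
          (by rw [Walk.length_concat]; omega)
        refine ⟨v, q, hq, hvleaf, fun y hy => hsub y ?_⟩
        rw [Walk.support_concat]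
        simp [hy]

/-- On a monotone chain, everything is `≥` the head. -/
lemma chain'_head_le {V : Type*} (R : V → V → Prop) (htrans : Transitive R)
    {a : V} {l : List V} (h : List.Chain' R (a :: l)) :
    ∀ x ∈ a :: l, x = a ∨ R a x := by
  haveI : IsTrans V R := ⟨fun _ _ _ h1 h2 => htrans h1 h2⟩
  simp only [List.Chain'] at h
  rw [List.isChain_iff_pairwise] at h
  rw [List.pairwise_cons] at h
  intro x hx
  rcases List.mem_cons.mp hx with h1 | h1
  · exact Or.inl h1
  · exact Or.inr (h.1 x h1)

lemma walk_head_rel {V : Type*} {T : SimpleGraph V} (R : V → V → Prop)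
    (htrans : Transitive R) {a b : V} (p : T.Walk a b)
    (h : List.Chain' R p.support) : ∀ x ∈ p.support, x = a ∨ R a x := by
  have hc := h
  rw [p.support_eq_cons] at hc
  intro x hx
  exact chain'_head_le R htrans hc x (by rwa [← p.support_eq_cons])

lemma walk_last_rel {V : Type*} {T : SimpleGraph V} (R : V → V → Prop)
    (htrans : Transitive R) {a b : V} (p : T.Walk a b)
    (h : List.Chain' R p.support) : ∀ x ∈ p.support, x = b ∨ R x b := by
  have hrev : List.Chain' (flip R) p.reverse.support := by
    simp only [List.Chain']
    rw [Walk.support_reverse, List.isChain_reverse]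
    exact h
  intro x hx
  have hx' : x ∈ p.reverse.support := by rwa [Walk.support_reverse, List.mem_reverse]
  exact walk_head_rel (flip R) (fun _ _ _ h1 h2 => htrans h2 h1) p.reverse hrev x hx'

/-- For a star-convex tree whose core contains a leaf, the extremal weights
over all vertices are attained on the union of the leaf set and the core. -/
theorem extremes_on_leaves_and_core {V : Type*} [Fintype V] (T : SimpleGraph V)
    (w : V → NNReal) (hconn : T.Connected) (hacyc : T.IsAcyclic)
    (hleaves : ∃ a b : V, a ≠ b ∧ IsLeaf T a ∧ IsLeaf T b)
    (hcl : ∃ u, InCore T w u ∧ IsLeaf T u) :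
    (∀ x : V, ∃ v, (IsLeaf T v ∨ InCore T w v) ∧ w x ≤ w v) ∧
    (∀ x : V, ∃ v, (IsLeaf T v ∨ InCore T w v) ∧ w v ≤ w x) := by
  classical
  obtain ⟨u, hucore, huleaf⟩ := hcl
  -- For each x, find a leaf v and the (unique, monotone) path from u to v through x.
  have key : ∀ x : V, ∃ (v : V), IsLeaf T v ∧
      ∃ p : T.Walk u v, p.IsPath ∧ WalkMonotone w p ∧ x ∈ p.support := by
    intro x
    obtain ⟨p0⟩ := hconn.preconnected u x
    have hp0 : p0.toPath.1.IsPath := p0.toPath.2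
    have hx0 : x ∈ p0.toPath.1.support := Walk.end_mem_support _
    obtain ⟨v, q, hq, hvleaf, hsub⟩ := extend_to_leaf hacyc huleaf
      (Fintype.card V) x p0.toPath.1 hp0 (by omega)
    obtain ⟨p', hp', hmono⟩ := hucore v hvleaf
    have hequ : q = p' := congrArg Subtype.val
      (hacyc.path_unique ⟨q, hq⟩ ⟨p', hp'⟩)
    refine ⟨v, hvleaf, p', hp', hmono, ?_⟩
    rw [← hequ]
    exact hsub x hx0
  have htrans1 : Transitive (fun a b : V => w a ≤ w b) := fun _ _ _ => le_trans
  have htrans2 : Transitive (fun a b : V => w b ≤ w a) := fun _ _ _ h1 h2 => le_trans h2 h1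
  constructor
  · intro x
    obtain ⟨v, hvleaf, p, hp, hmono, hx⟩ := key x
    rcases hmono with hm | hm
    · -- nondecreasing: w x ≤ w v
      refine ⟨v, Or.inl hvleaf, ?_⟩
      rcases walk_last_rel _ htrans1 p hm x hx with h | h
      · exact h ▸ le_refl _
      · exact h
    · -- nonincreasing: w x ≤ w u
      refine ⟨u, Or.inl huleaf, ?_⟩
      rcases walk_head_rel _ htrans2 p hm x hx with h | h
      · exact h ▸ le_refl _
      · exact h
  · intro x
    obtain ⟨v, hvleaf, p, hp, hmono, hx⟩ := key x
    rcases hmono with hm | hm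
    · -- nondecreasing: w u ≤ w x
      refine ⟨u, Or.inl huleaf, ?_⟩
      rcases walk_head_rel _ htrans1 p hm x hx with h | h
      · exact h ▸ le_refl _
      · exact h
    · -- nonincreasing: w v ≤ w x
      refine ⟨v, Or.inl hvleaf, ?_⟩
      rcases walk_last_rel _ htrans2 p hm x hx with h | h
      · exact h ▸ le_refl _
      · exact h
end
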